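/- Let D ⊂ ℝ^d be a bounded open set with irreducible symmetry group and let T be an invertible d×d real matrix. Then I(T^{-⊤}(D)) = (1/d)·I(D)·‖T^{-1}‖²_HS·|det T^{-1}|, where T^{-⊤} denotes the inverse transpose of T. -/

import Mathlib

/-!
Let `J` be the matrix of second moments `Jⱼₖ = ∫_D (xⱼ - x̄ⱼ)(xₖ - x̄ₖ) dx`, so that `I(D) = tr J`.
Since the centroid moves linearly, a change of variables gives `J(M D) = |det M| • M J Mᵀ` for
invertible `M`. For an orthogonal symmetry `U` of `D` this says that `U` commutes with `J`. Being
symmetric, `J` has a real eigenvector; its eigenspace contains the orbit of that vector, which spans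
everything by irreducibility (Schur's lemma), so `J = (I(D) / d) • 1`. Hence
`I(A D) = tr J(A D) = |det A| (I(D) / d) tr (A Aᵀ)`, and `A = T⁻ᵀ` gives the formula.
-/

open MeasureTheory Matrix

/-- The centroid of a set in `ℝ^d`. -/
noncomputable def centroid {d : ℕ} (Ω : Set (Fin d → ℝ)) : Fin d → ℝ :=
  ((volume Ω).toReal)⁻¹ • ∫ x in Ω, x ∂volume

/-- The second moment of mass of a set about its centroid. -/
noncomputable def secondMoment {d : ℕ} (Ω : Set (Fin d → ℝ)) : ℝ :=
  ∫ x in Ω, ∑ i, (x i - centroid Ω i) ^ 2 ∂volume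

theorem Continuous.integrableOn_of_isBounded {X E : Type*} [MetricSpace X] [ProperSpace X]
    [MeasurableSpace X] [OpensMeasurableSpace X] [NormedAddCommGroup E] {μ : Measure X}
    [IsFiniteMeasureOnCompacts μ] {g : X → E} (hg : Continuous g) {s : Set X}
    (hs : Bornology.IsBounded s) : IntegrableOn g s μ :=
  hg.continuousOn.integrableOn_compact hs.isCompact_closure |>.mono_set subset_closure

namespace Matrix

variable {ι : Type*} [Fintype ι]

theorem trace_mul_transpose_self {m : Type*} [Fintype m] (A : Matrix m ι ℝ) :
    trace (A * Aᵀ) = ∑ i, ∑ j, A i j ^ 2 := by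
  simp [trace, mul_apply, sq]

theorem isBounded_image_mulVec (M : Matrix ι ι ℝ) {s : Set (ι → ℝ)}
    (hs : Bornology.IsBounded s) : Bornology.IsBounded (M.mulVec '' s) :=
  (LinearMap.toContinuousLinearMap M.mulVecLin).lipschitz.isBounded_image hs

variable [DecidableEq ι]

theorem IsHermitian.exists_mulVec_eq_smul {𝕜 : Type*} [RCLike 𝕜] [Nonempty ι]
    {A : Matrix ι ι 𝕜} (hA : A.IsHermitian) : ∃ v ≠ 0, ∃ c : ℝ, A *ᵥ v = c • v := by
  let i := Classical.arbitrary ι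
  exact ⟨_, (WithLp.ofLp_eq_zero 2).ne.2 (hA.eigenvectorBasis.orthonormal.ne_zero i), _,
    hA.mulVec_eigenvectorBasis i⟩

theorem eq_smul_one_of_commute_of_span_eq_top {R : Type*} [CommRing R] {J : Matrix ι ι R}
    {S : Set (Matrix ι ι R)} (hS : ∀ U ∈ S, Commute U J) {v : ι → R} {c : R}
    (hv : J *ᵥ v = c • v) (hspan : Submodule.span R {w | ∃ U ∈ S, w = U *ᵥ v} = ⊤) :
    J = c • 1 := by
  have heig : Submodule.span R {w | ∃ U ∈ S, w = U *ᵥ v} ≤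
      Module.End.eigenspace (toLin' J) c := by
    refine Submodule.span_le.2 ?_
    rintro _ ⟨U, hU, rfl⟩
    rw [SetLike.mem_coe, Module.End.mem_eigenspace_iff, toLin'_apply, mulVec_mulVec,
      ← (hS U hU).eq, ← mulVec_mulVec, hv, mulVec_smul]
  rw [hspan] at heig
  refine ext_iff_mulVec.2 fun x => ?_
  rw [smul_mulVec, one_mulVec, ← toLin'_apply]
  exact Module.End.mem_eigenspace_iff.1 (heig Submodule.mem_top)

theorem volume_image_mulVec (M : Matrix ι ι ℝ) (s : Set (ι → ℝ)) :
    volume (M.mulVec '' s) = ENNReal.ofReal |M.det| * volume s :=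
  LinearMap.det_toLin' M ▸ Measure.addHaar_image_linearMap volume (toLin' M) s

theorem setIntegral_image_mulVec {E : Type*} [NormedAddCommGroup E] [NormedSpace ℝ E]
    (M : Matrix ι ι ℝ) (hM : IsUnit M.det) {s : Set (ι → ℝ)} (hs : MeasurableSet s)
    (g : (ι → ℝ) → E) :
    ∫ x in M.mulVec '' s, g x = |M.det| • ∫ x in s, g (M *ᵥ x) := by
  let L := LinearMap.toContinuousLinearMap (toLin' M)
  have hL : L.det = M.det := LinearMap.det_toLin' M
  have hinj : Set.InjOn M.mulVec s :=
    (mulVec_injective_iff_isUnit.2 ((isUnit_iff_isUnit_det M).2 hM)).injOn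
  rw [integral_image_eq_integral_abs_det_fderiv_smul (f := M.mulVec) volume hs
    (fun x _ => L.hasFDerivAt.hasFDerivWithinAt) hinj, hL, integral_smul]

theorem setIntegral_mulVec (M : Matrix ι ι ℝ) (hM : IsUnit M.det) (s : Set (ι → ℝ)) :
    ∫ x in s, M *ᵥ x = M *ᵥ ∫ x in s, x :=
  ((LinearMap.equivOfDetNeZero (toLin' M) (by simpa using hM.ne_zero)).toContinuousLinearEquiv
    |>.integral_comp_comm _)

theorem integral_mulVec_mul_mulVec {X : Type*} [MeasurableSpace X] {μ : Measure X}
    {m n : Type*} [Fintype n] (M : Matrix m n ℝ) {f : X → n → ℝ}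
    (hf : ∀ p q, Integrable (fun x => f x p * f x q) μ) (j k : m) :
    ∫ x, (M *ᵥ f x) j * (M *ᵥ f x) k ∂μ =
      (M * Matrix.of (fun p q => ∫ x, f x p * f x q ∂μ) * Mᵀ) j k := by
  have hexpand (x : X) : (M *ᵥ f x) j * (M *ᵥ f x) k =
      ∑ q, ∑ p, M j p * M k q * (f x p * f x q) := by
    simp only [mulVec, dotProduct, Finset.sum_mul_sum]
    rw [Finset.sum_comm]
    exact Finset.sum_congr rfl fun q _ => Finset.sum_congr rfl fun p _ => by ring
  simp only [hexpand]
  rw [integral_finsetSum _ fun q _ => integrable_finsetSum _ fun p _ => (hf p q).const_mul _]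
  simp only [mul_apply, of_apply, transpose_apply, Finset.sum_mul]
  refine Finset.sum_congr rfl fun q _ => ?_
  rw [integral_finsetSum _ fun p _ => (hf p q).const_mul _]
  exact Finset.sum_congr rfl fun p _ => by rw [integral_const_mul]; ring

end Matrix

section SecondMoment

variable {d : ℕ}

theorem centroid_image_mulVec (M : Matrix (Fin d) (Fin d) ℝ) (hM : IsUnit M.det)
    {Ω : Set (Fin d → ℝ)} (hΩ : MeasurableSet Ω) :
    centroid (M.mulVec '' Ω) = M *ᵥ centroid Ω := by
  have hdet : |M.det| ≠ 0 := abs_ne_zero.2 hM.ne_zero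
  rw [centroid, centroid, volume_image_mulVec, setIntegral_image_mulVec M hM hΩ,
    setIntegral_mulVec M hM, ENNReal.toReal_mul, ENNReal.toReal_ofReal (abs_nonneg _),
    _root_.mul_inv_rev, mul_smul, inv_smul_smul₀ hdet, mulVec_smul]

noncomputable def secondMomentMatrix (Ω : Set (Fin d → ℝ)) : Matrix (Fin d) (Fin d) ℝ :=
  Matrix.of fun j k => ∫ x in Ω, (x j - centroid Ω j) * (x k - centroid Ω k)

theorem secondMomentMatrix_isSymm (Ω : Set (Fin d → ℝ)) : (secondMomentMatrix Ω).IsSymm :=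
  IsSymm.ext fun _ _ => integral_congr_ae (.of_forall fun _ => mul_comm _ _)

theorem trace_secondMomentMatrix {Ω : Set (Fin d → ℝ)} (hΩ : Bornology.IsBounded Ω) :
    trace (secondMomentMatrix Ω) = secondMoment Ω := by
  have hint (i : Fin d) : IntegrableOn (fun x : Fin d → ℝ => (x i - centroid Ω i) ^ 2) Ω :=
    (((continuous_apply i).sub continuous_const).pow 2).integrableOn_of_isBounded hΩ
  rw [secondMoment, integral_finsetSum _ fun i _ => hint i]
  simp only [trace, diag, secondMomentMatrix, of_apply, sq]

theorem secondMomentMatrix_image_mulVec (M : Matrix (Fin d) (Fin d) ℝ) (hM : IsUnit M.det)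
    {Ω : Set (Fin d → ℝ)} (hΩ : MeasurableSet Ω) (hbd : Bornology.IsBounded Ω) :
    secondMomentMatrix (M.mulVec '' Ω) = |M.det| • (M * secondMomentMatrix Ω * Mᵀ) := by
  ext j k
  have hint (p q : Fin d) : IntegrableOn
      (fun x : Fin d → ℝ => (x - centroid Ω) p * (x - centroid Ω) q) Ω :=
    (((continuous_apply p).sub continuous_const).mul
      ((continuous_apply q).sub continuous_const)).integrableOn_of_isBounded hbd
  rw [secondMomentMatrix, of_apply, centroid_image_mulVec M hM hΩ,
    setIntegral_image_mulVec M hM hΩ, Matrix.smul_apply]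
  simp_rw [← Pi.sub_apply, ← mulVec_sub]
  rw [integral_mulVec_mul_mulVec M hint]
  rfl

theorem commute_secondMomentMatrix {U : Matrix (Fin d) (Fin d) ℝ}
    (hU : U ∈ orthogonalGroup (Fin d) ℝ) {Ω : Set (Fin d → ℝ)} (hUΩ : U.mulVec '' Ω = Ω)
    (hΩ : MeasurableSet Ω) (hbd : Bornology.IsBounded Ω) :
    Commute U (secondMomentMatrix Ω) := by
  have habs : |U.det| = 1 :=
    (Real.norm_eq_abs _).symm.trans (CStarRing.norm_of_mem_unitary (det_of_mem_unitary hU))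
  have hJ := secondMomentMatrix_image_mulVec U (UnitaryGroup.det_isUnit ⟨U, hU⟩) hΩ hbd
  rw [hUΩ, habs, one_smul] at hJ
  calc U * secondMomentMatrix Ω = U * secondMomentMatrix Ω * (Uᵀ * U) := by
        rw [(mem_orthogonalGroup_iff' _ _).1 hU, Matrix.mul_one]
    _ = secondMomentMatrix Ω * U := by rw [← Matrix.mul_assoc, ← hJ]

theorem secondMomentMatrix_eq_smul_one (hd : 0 < d) {D : Set (Fin d → ℝ)}
    (hD : MeasurableSet D) (hbd : Bornology.IsBounded D)
    (hirr : ∀ x : Fin d → ℝ, x ≠ 0 →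
      Submodule.span ℝ {w : Fin d → ℝ | ∃ U : Matrix (Fin d) (Fin d) ℝ,
        (U ∈ orthogonalGroup (Fin d) ℝ ∧ U.mulVec '' D = D) ∧ w = U.mulVec x} = ⊤) :
    secondMomentMatrix D = (secondMoment D / d) • 1 := by
  have : Nonempty (Fin d) := Fin.pos_iff_nonempty.1 hd
  obtain ⟨v, hv, c, hJv⟩ :=
    (isHermitian_iff_isSymm.2 (secondMomentMatrix_isSymm D)).exists_mulVec_eq_smul
  have hJ : secondMomentMatrix D = c • 1 :=
    eq_smul_one_of_commute_of_span_eq_top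
      (S := {U | U ∈ orthogonalGroup (Fin d) ℝ ∧ U.mulVec '' D = D})
      (fun U hU => commute_secondMomentMatrix hU.1 hU.2 hD hbd) hJv (hirr v hv)
  have hc : secondMoment D = d * c := by
    rw [← trace_secondMomentMatrix hbd, hJ, trace_smul, trace_one, Fintype.card_fin,
      smul_eq_mul, mul_comm]
  rw [hJ, hc, mul_div_cancel_left₀ _ (Nat.cast_ne_zero.2 hd.ne')]

end SecondMoment

theorem second_moment_of_inverse_transpose_image_general {d : ℕ} (hd : 0 < d)
    (D : Set (Fin d → ℝ)) (hopen : IsOpen D) (hbd : Bornology.IsBounded D)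
    (hirr : ∀ x : Fin d → ℝ, x ≠ 0 →
      Submodule.span ℝ {w : Fin d → ℝ | ∃ U : Matrix (Fin d) (Fin d) ℝ,
        (U ∈ Matrix.orthogonalGroup (Fin d) ℝ ∧ U.mulVec '' D = D) ∧ w = U.mulVec x}
        = ⊤)
    (T : Matrix (Fin d) (Fin d) ℝ) (hT : IsUnit T.det) :
    secondMoment ((T⁻¹)ᵀ.mulVec '' D)
      = (1 / (d : ℝ)) * secondMoment D * (∑ i, ∑ j, (T⁻¹ i j) ^ 2)
          * |(T⁻¹).det| := by
  have hD : MeasurableSet D := hopen.measurableSet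
  have hA : IsUnit (T⁻¹)ᵀ.det := by
    rw [det_transpose]
    exact isUnit_nonsing_inv_det T hT
  rw [← trace_secondMomentMatrix (isBounded_image_mulVec _ hbd),
    secondMomentMatrix_image_mulVec _ hA hD hbd, secondMomentMatrix_eq_smul_one hd hD hbd hirr,
    Matrix.mul_smul, Matrix.mul_one, Matrix.smul_mul, trace_smul, trace_smul,
    trace_mul_transpose_self, Finset.sum_comm, det_transpose]
  simp only [transpose_apply, smul_eq_mul]
  ring

/-- `I(T^{-⊤}(D)) = (1/d)·I(D)·‖T⁻¹‖²_HS·|det T⁻¹|` for `D` with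
irreducible symmetry group. -/
theorem second_moment_of_inverse_transpose_image {d : ℕ} (hd : 0 < d)
    (D : Set (Fin d → ℝ)) (hopen : IsOpen D) (hbd : Bornology.IsBounded D)
    (hpos : 0 < volume D) (hfin : volume D < ⊤)
    (hirr : ∀ x : Fin d → ℝ, x ≠ 0 →
      Submodule.span ℝ {w : Fin d → ℝ | ∃ U : Matrix (Fin d) (Fin d) ℝ,
        (U ∈ Matrix.orthogonalGroup (Fin d) ℝ ∧ U.mulVec '' D = D) ∧ w = U.mulVec x}
        = ⊤)
    (T : Matrix (Fin d) (Fin d) ℝ) (hT : IsUnit T.det) :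
    secondMoment ((T⁻¹)ᵀ.mulVec '' D)
      = (1 / (d : ℝ)) * secondMoment D * (∑ i, ∑ j, (T⁻¹ i j) ^ 2)
          * |(T⁻¹).det| :=
  second_moment_of_inverse_transpose_image_general hd D hopen hbd hirr T hT
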